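/- arXiv:math/0507026 — 5 statements merged into one kernel-verified Lean document; each statement's English description precedes it below -/
import Mathlib

section
/- The number of planar rook diagrams on k vertices (one-to-one partial matchings between two rows of k vertices that can be drawn without edge crossings) equals the central binomial coefficient C(2k, k). -/
open Finset

namespace PlanarRook

variable {k : ℕ}

/-- The domain of a partial matching. -/
def dom (f : Fin k → Option (Fin k)) : Finset (Fin k) :=
  Finset.univ.filter fun i => (f i).isSome

/-- The range of a partial matching. -/
def ran (f : Fin k → Option (Fin k)) : Finset (Fin k) :=
  Finset.univ.filter fun a => ∃ i, f i = some a

lemma mem_dom {f : Fin k → Option (Fin k)} {i : Fin k} :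
    i ∈ dom f ↔ (f i).isSome := by simp [dom]

lemma mem_ran {f : Fin k → Option (Fin k)} {a : Fin k} :
    a ∈ ran f ↔ ∃ i, f i = some a := by simp [ran]

lemma card_dom_eq_card_ran {f : Fin k → Option (Fin k)}
    (h1 : ∀ i j a, f i = some a → f j = some a → i = j) :
    (dom f).card = (ran f).card := by
  refine Finset.card_bij (fun i hi => (f i).get (mem_dom.1 hi)) ?_ ?_ ?_
  · intro i hi
    exact mem_ran.2 ⟨i, (Option.some_get _).symm⟩
  · intro i hi j hj hij
    have hij' : (f i).get (mem_dom.1 hi) = (f j).get (mem_dom.1 hj) := hij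
    exact h1 i j ((f j).get (mem_dom.1 hj)) (by rw [← hij', Option.some_get])
      (Option.some_get _).symm
  · intro a ha
    obtain ⟨i, hi⟩ := mem_ran.1 ha
    refine ⟨i, mem_dom.2 (by simp [hi]), ?_⟩
    simp [hi]

/-- Build the order-preserving partial matching from a pair of equal-cardinality finsets. -/
def build (S T : Finset (Fin k)) (h : S.card = T.card) : Fin k → Option (Fin k) :=
  fun i => if hi : i ∈ S then
    some (T.orderEmbOfFin h.symm ((S.orderIsoOfFin rfl).symm ⟨i, hi⟩)) else none

lemma build_inj (S T : Finset (Fin k)) (h : S.card = T.card) :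
    ∀ i j a, build S T h i = some a → build S T h j = some a → i = j := by
  intro i j a hi hj
  unfold build at hi hj
  split_ifs at hi hj with h1 h2
  have := (T.orderEmbOfFin h.symm).injective
    ((Option.some_injective _ hi).trans (Option.some_injective _ hj).symm)
  have := (S.orderIsoOfFin rfl).symm.injective this
  exact congrArg Subtype.val this

lemma build_mono (S T : Finset (Fin k)) (h : S.card = T.card) :
    ∀ i j a b, i < j → build S T h i = some a → build S T h j = some b → a < b := by
  intro i j a b hij hi hj
  unfold build at hi hj
  split_ifs at hi hj with h1 h2
  rw [← Option.some_injective _ hi, ← Option.some_injective _ hj]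
  exact (T.orderEmbOfFin h.symm).strictMono
    ((S.orderIsoOfFin rfl).symm.strictMono (Subtype.mk_lt_mk.2 hij))

/-- Planar rook diagrams are in bijection with pairs of equal-cardinality finsets. -/
def equivPairs (k : ℕ) :
    {f : Fin k → Option (Fin k) //
      (∀ i j a, f i = some a → f j = some a → i = j) ∧
      (∀ i j a b, i < j → f i = some a → f j = some b → a < b)} ≃
    {p : Finset (Fin k) × Finset (Fin k) // p.1.card = p.2.card} where
  toFun f := ⟨(dom f.1, ran f.1), card_dom_eq_card_ran f.2.1⟩
  invFun p := ⟨build p.1.1 p.1.2 p.2, build_inj _ _ _, build_mono _ _ _⟩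
  left_inv := by
    rintro ⟨f, h1, h2⟩
    ext i : 2
    simp only [build]
    split_ifs with hi
    case neg =>
      cases h : f i with
      | none => rfl
      | some a => exact absurd (mem_dom.2 (by simp [h])) hi
    · -- i ∈ dom f
      set S := dom f with hS
      set T := ran f with hT
      have hfmem : ∀ m : Fin S.card, f ((S.orderIsoOfFin rfl m : Fin k)) ≠ none := by
        intro m hnone
        have : ((S.orderIsoOfFin rfl m : Fin k)) ∈ S := (S.orderIsoOfFin rfl m).2
        rw [mem_dom, hnone] at this
        simp at this
      set g : Fin S.card → Fin k :=
        fun m => (f ((S.orderIsoOfFin rfl m : Fin k))).get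
          (Option.ne_none_iff_isSome.1 (hfmem m)) with hg
      have hgsome : ∀ m, f ((S.orderIsoOfFin rfl m : Fin k)) = some (g m) :=
        fun m => (Option.some_get _).symm
      have hgmem : ∀ m, g m ∈ T := fun m => mem_ran.2 ⟨_, hgsome m⟩
      have hgmono : StrictMono g := by
        intro m m' hmm
        exact h2 _ _ _ _ ((S.orderIsoOfFin rfl).strictMono hmm) (hgsome m) (hgsome m')
      have hgu : g = T.orderEmbOfFin (card_dom_eq_card_ran h1).symm :=
        Finset.orderEmbOfFin_unique _ hgmem hgmono
      set m := (S.orderIsoOfFin rfl).symm ⟨i, hi⟩ with hm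
      have him : (S.orderIsoOfFin rfl) m = ⟨i, hi⟩ := (S.orderIsoOfFin rfl).apply_symm_apply _
      have : f i = some (g m) := by
        rw [← hgsome m, him]
      rw [this, ← hgu]
  right_inv := by
    rintro ⟨⟨S, T⟩, h⟩
    refine Subtype.ext (Prod.ext ?_ ?_)
    · ext i
      simp only [mem_dom, build]
      split_ifs with hi <;> simp [hi]
    · ext a
      simp only [mem_ran, build]
      constructor
      · rintro ⟨i, hi⟩
        split_ifs at hi with h1
        rw [← Option.some_injective _ hi]
        exact T.orderEmbOfFin_mem _ _
      · intro ha
        set m := (T.orderIsoOfFin h.symm).symm ⟨a, ha⟩ with hm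
        set i : Fin k := ((S.orderIsoOfFin rfl) m : Fin k) with hi
        have hiS : i ∈ S := ((S.orderIsoOfFin rfl) m).2
        refine ⟨i, ?_⟩
        rw [dif_pos hiS]
        congr 1
        have h1 : (S.orderIsoOfFin rfl).symm ⟨i, hiS⟩ = m := by
          have he : (⟨i, hiS⟩ : {x // x ∈ S}) = (S.orderIsoOfFin rfl) m := Subtype.ext hi
          rw [he, (S.orderIsoOfFin rfl).symm_apply_apply]
        rw [h1]
        have h2 : T.orderEmbOfFin h.symm m = ((T.orderIsoOfFin h.symm) m : Fin k) :=
          (T.coe_orderIsoOfFin_apply h.symm m).symm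
        rw [h2, hm, (T.orderIsoOfFin h.symm).apply_symm_apply]

/-- Pairs of equal-cardinality finsets correspond to `k`-subsets of `Fin k ⊕ Fin k`. -/
def pairsEquivSubsets (k : ℕ) :
    {p : Finset (Fin k) × Finset (Fin k) // p.1.card = p.2.card} ≃
    {s : Finset (Fin k ⊕ Fin k) // s.card = k} where
  toFun p := ⟨p.1.1.disjSum p.1.2ᶜ, by
    rw [Finset.card_disjSum, Finset.card_compl, Fintype.card_fin, p.2]
    exact Nat.add_sub_cancel' (Finset.card_le_univ _ |>.trans_eq (by simp))⟩
  invFun s := ⟨(s.1.toLeft, s.1.toRightᶜ), by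
    have h := Finset.card_toLeft_add_card_toRight (u := s.1)
    rw [s.2] at h
    simp only
    rw [Finset.card_compl, Fintype.card_fin]
    omega⟩
  left_inv := by
    rintro ⟨⟨S, T⟩, h⟩
    refine Subtype.ext (Prod.ext ?_ ?_) <;> simp
  right_inv := by
    rintro ⟨s, hs⟩
    refine Subtype.ext ?_
    simp [Finset.toLeft_disjSum_toRight]

end PlanarRook

/-- The number of planar rook diagrams on `k` vertices — order-preserving partial
injections from `{1,...,k}` to `{1',...,k'}` — is the central binomial coefficient
`C(2k, k)`. -/
theorem card_planar_rook_diagrams (k : ℕ) :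
    Nat.card {f : Fin k → Option (Fin k) //
      (∀ i j a, f i = some a → f j = some a → i = j) ∧
      (∀ i j a b, i < j → f i = some a → f j = some b → a < b)} =
    (2*k).choose k := by
  rw [Nat.card_congr ((PlanarRook.equivPairs k).trans (PlanarRook.pairsEquivSubsets k))]
  rw [Nat.card_eq_fintype_card, Fintype.card_finset_len, Fintype.card_sum, Fintype.card_fin]
  ring_nf
end

section
/- A set partition d of {1, ..., 2k}, viewed as a diagram in the partition monoid A_k, is completely determined by its insertion sequence E = (E_j), indexed by j ∈ {1/2, 1, 3/2, ..., 2k}: the map d ↦ E is injective. -/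
open Classical

/-- `i` and `j` lie in a common block of the set partition `P`. -/
def SameBlock {n : ℕ} (P : Finpartition (Finset.univ : Finset (Fin n)))
    (i j : Fin n) : Prop :=
  ∃ B ∈ P.parts, i ∈ B ∧ j ∈ B

/-- `{i, j}` is a nearest-neighbor edge of the standard representation of `P`:
`i < j` lie in the same block and no vertex strictly between them lies in that block. -/
def IsEdge {n : ℕ} (P : Finpartition (Finset.univ : Finset (Fin n)))
    (i j : Fin n) : Prop :=
  i < j ∧ SameBlock P i j ∧ ∀ m : Fin n, i < m → m < j → ¬ SameBlock P i m

/-- The whole-step part of the insertion sequence: `insLeft P j` is the label of the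
edge with left endpoint `j` (labels are `2k+1-ℓ` with `ℓ` the 1-based right endpoint),
or `none` if `j` is not a left endpoint. -/
noncomputable def insLeft {k : ℕ} (P : Finpartition (Finset.univ : Finset (Fin (2*k))))
    (j : Fin (2*k)) : Option ℕ :=
  if h : ∃ j', IsEdge P j j' then some (2*k - (h.choose : Fin (2*k)).val) else none

/-- The half-step part of the insertion sequence: `insRight P j` is the label of the
edge with right endpoint `j`, or `none` if `j` is not a right endpoint. -/
noncomputable def insRight {k : ℕ} (P : Finpartition (Finset.univ : Finset (Fin (2*k))))
    (j : Fin (2*k)) : Option ℕ :=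
  if ∃ i, IsEdge P i j then some (2*k - j.val) else none

section Aux
variable {n : ℕ}

lemma sameBlock_refl (P : Finpartition (Finset.univ : Finset (Fin n))) (i : Fin n) :
    SameBlock P i i := by
  obtain ⟨B, hB, hi⟩ := P.exists_mem (Finset.mem_univ i)
  exact ⟨B, hB, hi, hi⟩

lemma sameBlock_symm (P : Finpartition (Finset.univ : Finset (Fin n))) {i j : Fin n}
    (h : SameBlock P i j) : SameBlock P j i := by
  obtain ⟨B, hB, hi, hj⟩ := h; exact ⟨B, hB, hj, hi⟩

lemma sameBlock_trans (P : Finpartition (Finset.univ : Finset (Fin n))) {i j l : Fin n}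
    (h₁ : SameBlock P i j) (h₂ : SameBlock P j l) : SameBlock P i l := by
  obtain ⟨B, hB, hi, hj⟩ := h₁
  obtain ⟨C, hC, hj', hl⟩ := h₂
  have hBC := P.eq_of_mem_parts hB hC hj hj'
  subst hBC; exact ⟨B, hB, hi, hl⟩

lemma isEdge_unique (P : Finpartition (Finset.univ : Finset (Fin n))) {i j j' : Fin n}
    (h : IsEdge P i j) (h' : IsEdge P i j') : j = j' := by
  rcases lt_trichotomy j j' with hlt | heq | hgt
  · exact absurd h.2.1 (h'.2.2 j h.1 hlt)
  · exact heq
  · exact absurd h'.2.1 (h.2.2 j' h'.1 hgt)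

lemma exists_edge_step (P : Finpartition (Finset.univ : Finset (Fin n))) {i j : Fin n}
    (hij : i < j) (h : SameBlock P i j) :
    ∃ m, IsEdge P i m ∧ m ≤ j ∧ SameBlock P m j := by
  classical
  set S := Finset.univ.filter (fun m => i < m ∧ SameBlock P i m) with hS
  have hjS : j ∈ S := by simp [hS, hij, h]
  have hne : S.Nonempty := ⟨j, hjS⟩
  set m := S.min' hne with hm
  have hmS : m ∈ S := S.min'_mem hne
  simp only [hS, Finset.mem_filter] at hmS
  refine ⟨m, ⟨hmS.2.1, hmS.2.2, ?_⟩, S.min'_le j hjS,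
    sameBlock_trans P (sameBlock_symm P hmS.2.2) h⟩
  intro m' h1 h2 hsb
  have hm'S : m' ∈ S := by simp [hS, h1, hsb]
  exact absurd (S.min'_le m' hm'S) (not_le.mpr h2)

lemma sameBlock_transfer {P Q : Finpartition (Finset.univ : Finset (Fin n))}
    (hE : ∀ i j, IsEdge P i j → IsEdge Q i j) :
    ∀ N (i j : Fin n), j.val - i.val ≤ N → i ≤ j → SameBlock P i j → SameBlock Q i j := by
  intro N
  induction N with
  | zero =>
    intro i j h1 h2 hsb
    have h2' : i.val ≤ j.val := h2
    have : i = j := Fin.ext (by omega)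
    subst this; exact sameBlock_refl Q i
  | succ N ih =>
    intro i j h1 h2 hsb
    rcases eq_or_lt_of_le h2 with heq | hlt
    · subst heq; exact sameBlock_refl Q i
    · obtain ⟨m, hedge, hmj, hsb'⟩ := exists_edge_step P hlt hsb
      have hQim : SameBlock Q i m := (hE _ _ hedge).2.1
      rcases eq_or_lt_of_le hmj with heq | hlt'
      · subst heq; exact hQim
      · have him : i < m := hedge.1
        have : j.val - m.val ≤ N := by
          have h3 : i.val < m.val := him
          have h4 : m.val < j.val := hlt'
          omega
        exact sameBlock_trans Q hQim (ih m j this (le_of_lt hlt') hsb')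

lemma mem_part_iff (P : Finpartition (Finset.univ : Finset (Fin n))) {B : Finset (Fin n)}
    (hB : B ∈ P.parts) {x : Fin n} (hx : x ∈ B) (y : Fin n) :
    y ∈ B ↔ SameBlock P x y := by
  constructor
  · intro hy; exact ⟨B, hB, hx, hy⟩
  · rintro ⟨C, hC, hx', hy⟩
    have := P.eq_of_mem_parts hB hC hx hx'
    subst this; exact hy

lemma parts_subset_of_sameBlock {P Q : Finpartition (Finset.univ : Finset (Fin n))}
    (h : ∀ i j, SameBlock P i j ↔ SameBlock Q i j) : P.parts ⊆ Q.parts := by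
  intro B hB
  have hne : B.Nonempty := P.nonempty_of_mem_parts hB
  obtain ⟨x, hx⟩ := hne
  obtain ⟨C, hC, hxC⟩ := Q.exists_mem (Finset.mem_univ x)
  have : B = C := by
    ext y
    rw [mem_part_iff P hB hx y, mem_part_iff Q hC hxC y, h]
  rw [this]; exact hC

end Aux

lemma insLeft_eq_of_edge {k : ℕ} {P : Finpartition (Finset.univ : Finset (Fin (2*k)))}
    {i j : Fin (2*k)} (h : IsEdge P i j) : insLeft P i = some (2*k - j.val) := by
  unfold insLeft
  have hex : ∃ j', IsEdge P i j' := ⟨j, h⟩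
  rw [dif_pos hex]
  have := isEdge_unique P hex.choose_spec h
  rw [this]

lemma edge_of_insLeft_eq {k : ℕ} {P Q : Finpartition (Finset.univ : Finset (Fin (2*k)))}
    (hPQ : insLeft P = insLeft Q) {i j : Fin (2*k)} (h : IsEdge P i j) : IsEdge Q i j := by
  have h1 : insLeft Q i = some (2*k - j.val) := by
    rw [← hPQ]; exact insLeft_eq_of_edge h
  unfold insLeft at h1
  by_cases hex : ∃ j', IsEdge Q i j'
  · rw [dif_pos hex] at h1
    have h2 := Option.some.inj h1
    have hlt : (hex.choose : Fin (2*k)).val < 2*k := hex.choose.isLt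
    have hjlt : j.val < 2*k := j.isLt
    have h3 : hex.choose = j := Fin.ext (by omega)
    have := hex.choose_spec
    rwa [h3] at this
  · rw [dif_neg hex] at h1; exact absurd h1 (by simp)

/-- A set partition of `{1, ..., 2k}` is completely determined by its insertion
sequence: the map `d ↦ E` is injective. -/

theorem insertion_sequence_injective (k : ℕ) :
    Function.Injective
      (fun P : Finpartition (Finset.univ : Finset (Fin (2*k))) =>
        (insLeft P, insRight P)) := by
  intro P Q h
  simp only [Prod.mk.injEq] at h
  have hL : insLeft P = insLeft Q := h.1
  have hPQ : ∀ i j, IsEdge P i j → IsEdge Q i j := fun i j => edge_of_insLeft_eq hL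
  have hQP : ∀ i j, IsEdge Q i j → IsEdge P i j := fun i j => edge_of_insLeft_eq hL.symm
  have hSB : ∀ i j, SameBlock P i j ↔ SameBlock Q i j := by
    intro i j
    constructor
    · intro hs
      rcases le_total i j with hle | hle
      · exact sameBlock_transfer hPQ _ i j le_rfl hle hs
      · exact sameBlock_symm Q
          (sameBlock_transfer hPQ _ j i le_rfl hle (sameBlock_symm P hs))
    · intro hs
      rcases le_total i j with hle | hle
      · exact sameBlock_transfer hQP _ i j le_rfl hle hs
      · exact sameBlock_symm P
          (sameBlock_transfer hQP _ j i le_rfl hle (sameBlock_symm Q hs))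
  have hparts : P.parts = Q.parts :=
    le_antisymm (parts_subset_of_sameBlock hSB)
      (parts_subset_of_sameBlock (fun i j => (hSB i j).symm))
  exact Finpartition.ext hparts
end

section
/- Let k ∈ (1/2)ℤ_{>0}. The Catalan number C(2k) equals the sum over partitions λ of length at most 1 (λ = (ℓ) with 0 ≤ ℓ ≤ ⌊k⌋) of [binom(2k, ⌊k⌋ - ℓ) - binom(2k, ⌊k⌋ - ℓ - 1)]². -/
open Finset

private lemma vand_sq (m : ℕ) :
    ∑ k ∈ range (m+1), (m.choose k)^2 = (2*m).choose m := by
  rw [two_mul, Nat.add_choose_eq, Finset.Nat.sum_antidiagonal_eq_sum_range_succ_mk]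
  refine Finset.sum_congr rfl fun k hk => ?_
  rw [mem_range] at hk
  rw [Nat.choose_symm (by omega), sq]

private lemma vand_cross (m : ℕ) (hm : 1 ≤ m) :
    ∑ k ∈ range m, m.choose k * m.choose (k+1) = (2*m).choose (m-1) := by
  rw [two_mul, Nat.add_choose_eq, Finset.Nat.sum_antidiagonal_eq_sum_range_succ_mk]
  have h : m - 1 + 1 = m := by omega
  rw [show (m-1).succ = m by omega]
  refine Finset.sum_congr rfl fun k hk => ?_
  rw [mem_range] at hk
  have h2 : m - 1 - k = m - (k+1) := by omega
  rw [h2, Nat.choose_symm (by omega)]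

private lemma catalan_int (m : ℕ) (hm : 1 ≤ m) :
    (catalan m : ℤ) = ((2*m).choose m : ℤ) - ((2*m).choose (m-1) : ℤ) := by
  have key : (2*m).choose m * m = (2*m).choose (m-1) * (m+1) := by
    have h := Nat.choose_succ_right_eq (2*m) (m-1)
    have h1 : m - 1 + 1 = m := by omega
    have h2 : 2*m - (m-1) = m + 1 := by omega
    rw [h1, h2] at h
    omega
  have hc := succ_mul_catalan_eq_centralBinom m
  rw [Nat.centralBinom_eq_two_mul_choose] at hc
  have : ((m:ℤ)+1) * (catalan m : ℤ) = ((m:ℤ)+1) * (((2*m).choose m : ℤ) - ((2*m).choose (m-1) : ℤ)) := by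
    have hc' : ((m:ℤ)+1) * (catalan m : ℤ) = ((2*m).choose m : ℤ) := by exact_mod_cast hc
    have key' : ((2*m).choose m : ℤ) * m = ((2*m).choose (m-1) : ℤ) * ((m:ℤ)+1) := by
      exact_mod_cast key
    rw [hc']; linear_combination -key'
  exact mul_left_cancel₀ (by positivity) this

/-- For `m = 2k` with `k ∈ (1/2)ℤ_{>0}`, the Catalan number `C(m)` equals the sum over
`ℓ` with `0 ≤ ℓ ≤ ⌊m/2⌋` of `(binom(m, ⌊m/2⌋-ℓ) - binom(m, ⌊m/2⌋-ℓ-1))²`, where a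
binomial coefficient with negative lower index is `0`. -/
theorem catalan_eq_sum_sq_ballot (m : ℕ) (hm : 0 < m) :
    (catalan m : ℤ) =
      ∑ l ∈ Finset.range (m/2 + 1),
        ((m.choose (m/2 - l) : ℤ) -
          (if l + 1 ≤ m/2 then (m.choose (m/2 - l - 1) : ℤ) else 0))^2 := by
  set F : ℕ → ℤ := fun j => (m.choose j : ℤ) - (if 1 ≤ j then (m.choose (j-1) : ℤ) else 0) with hF
  -- rewrite goal sum as sum of (F j)^2
  have hgoal : ∑ l ∈ Finset.range (m/2 + 1),
        ((m.choose (m/2 - l) : ℤ) -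
          (if l + 1 ≤ m/2 then (m.choose (m/2 - l - 1) : ℤ) else 0))^2
      = ∑ j ∈ range (m/2 + 1), (F j)^2 := by
    rw [← Finset.sum_range_reflect (fun j => (F j)^2) (m/2+1)]
    refine Finset.sum_congr rfl fun l hl => ?_
    rw [mem_range] at hl
    have h1 : m/2 + 1 - 1 - l = m/2 - l := by omega
    rw [h1, hF]
    simp only
    congr 1
    congr 1
    by_cases h : l + 1 ≤ m/2
    · rw [if_pos h, if_pos (by omega)]
    · rw [if_neg h, if_neg (by omega)]
  rw [hgoal]
  -- antisymmetry
  have hanti : ∀ j ≤ m+1, F (m+1-j) = - F j := by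
    intro j hj
    rcases Nat.eq_zero_or_pos j with rfl | hj1
    · simp [hF, Nat.choose_eq_zero_of_lt (by omega : m < m+1), Nat.choose_self]
    rcases eq_or_lt_of_le hj with rfl | hjm
    · simp [hF, Nat.choose_eq_zero_of_lt (by omega : m < m+1), Nat.choose_self]
    -- 1 ≤ j ≤ m
    have hjm' : j ≤ m := by omega
    have e1 : m + 1 - j - 1 = m - j := by omega
    have e2 : m.choose (m+1-j) = m.choose (j-1) := by
      have : m - (j-1) = m+1-j := by omega
      rw [← this, Nat.choose_symm (by omega)]
    have e3 : m.choose (m-j) = m.choose j := Nat.choose_symm hjm'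
    rw [hF]
    simp only
    rw [if_pos (show (1:ℕ) ≤ m+1-j by omega), if_pos (show (1:ℕ) ≤ j by omega), e1, e2, e3]
    ring
  -- full sum
  have hsplit : ∑ j ∈ range (m+2), (F j)^2 = 2 * ∑ j ∈ range (m/2+1), (F j)^2 := by
    have hlen : m + 2 = (m/2 + 1) + (m + 1 - m/2) := by omega
    rw [hlen, Finset.sum_range_add]
    have hchunk : ∑ i ∈ range (m + 1 - m/2), (F (m/2 + 1 + i))^2
        = ∑ i ∈ range (m + 1 - m/2), (F i)^2 := by
      rw [← Finset.sum_range_reflect (fun i => (F (m/2 + 1 + i))^2) (m + 1 - m/2)]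
      refine Finset.sum_congr rfl fun i hi => ?_
      rw [mem_range] at hi
      have e : m/2 + 1 + (m + 1 - m/2 - 1 - i) = m + 1 - i := by omega
      rw [e, hanti i (by omega)]
      ring
    rw [hchunk]
    rcases Nat.even_or_odd m with ⟨t, rfl⟩ | ⟨t, rfl⟩
    · have : t + t + 1 - (t+t)/2 = (t+t)/2 + 1 := by omega
      rw [this]; ring
    · have h1 : 2*t + 1 + 1 - (2*t+1)/2 = ((2*t+1)/2 + 1) + 1 := by omega
      have hmid : F ((2*t+1)/2 + 1) = 0 := by
        have e1 : (2*t+1).choose ((2*t+1)/2+1) = (2*t+1).choose ((2*t+1)/2) := by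
          have h : (2*t+1) - (2*t+1)/2 = (2*t+1)/2 + 1 := by omega
          rw [← h, Nat.choose_symm (by omega)]
        rw [hF]; simp only
        rw [if_pos (show (1:ℕ) ≤ (2*t+1)/2+1 by omega), e1]
        simp
      have h2 : ∑ i ∈ range (((2*t+1)/2 + 1) + 1), (F i)^2
          = ∑ i ∈ range ((2*t+1)/2 + 1), (F i)^2 := by
        rw [Finset.sum_range_succ, hmid]; ring
      rw [h1, h2]
      ring
  -- value of full sum
  have hval : ∑ j ∈ range (m+2), (F j)^2
      = 2 * (((2*m).choose m : ℤ) - ((2*m).choose (m-1) : ℤ)) := by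
    have expand : ∀ j, (F j)^2 = (m.choose j : ℤ)^2
        + (if 1 ≤ j then (m.choose (j-1) : ℤ) else 0)^2
        - 2 * ((m.choose j : ℤ) * (if 1 ≤ j then (m.choose (j-1) : ℤ) else 0)) := by
      intro j; rw [hF]; ring
    rw [Finset.sum_congr rfl fun j _ => expand j]
    rw [Finset.sum_sub_distrib, Finset.sum_add_distrib, ← Finset.mul_sum]
    have s1 : ∑ j ∈ range (m+2), ((m.choose j : ℤ))^2 = ((2*m).choose m : ℤ) := by
      rw [Finset.sum_range_succ, Nat.choose_eq_zero_of_lt (by omega : m < m+1)]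
      push_cast
      rw [← vand_sq m]
      push_cast
      ring
    have s2 : ∑ j ∈ range (m+2), (if 1 ≤ j then (m.choose (j-1) : ℤ) else 0)^2
        = ((2*m).choose m : ℤ) := by
      rw [Finset.sum_range_succ' (fun j => (if 1 ≤ j then (m.choose (j-1) : ℤ) else 0)^2) (m+1)]
      simp only [if_neg (by omega : ¬ 1 ≤ 0), if_pos (by omega : ∀ {x : ℕ}, 1 ≤ x + 1)]
      rw [← vand_sq m]
      push_cast
      simp [Nat.add_sub_cancel]
    have s3 : ∑ j ∈ range (m+2), ((m.choose j : ℤ) * (if 1 ≤ j then (m.choose (j-1) : ℤ) else 0))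
        = ((2*m).choose (m-1) : ℤ) := by
      rw [Finset.sum_range_succ' (fun j => ((m.choose j : ℤ) * (if 1 ≤ j then (m.choose (j-1) : ℤ) else 0))) (m+1)]
      simp only [if_neg (by omega : ¬ 1 ≤ 0), if_pos (by omega : ∀ {x : ℕ}, 1 ≤ x + 1),
        Nat.add_sub_cancel, mul_zero, add_zero]
      rw [Finset.sum_range_succ, Nat.choose_eq_zero_of_lt (by omega : m < m+1)]
      rw [← vand_cross m hm]
      push_cast
      ring_nf
      simp [mul_comm]
    rw [s1, s2, s3]
    ring
  have := hsplit.symm.trans hval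
  rw [catalan_int m hm]
  linarith [this]
end

section
/- Jeu de taquin deletion is inverse to its reverse: if T is a standard tableau of shape λ ⊢ n containing entry x, and jdt deletion of x from T produces the tableau S of shape μ (with μ ⊆ λ, |λ/μ| = 1), then placing x in the box λ/μ of S and performing reverse jeu de taquin (iteratively swapping x with the larger of the entries directly above or directly to its left until rows and columns increase) recovers T. -/
/-- One run of jeu de taquin deletion with `fuel` steps: the moving entry sits at
position `(i, j)`; while the box below or to the right is occupied, swap with the
smaller of the two occupied neighbors (value `0` encodes an empty box). Returns the
final filling together with the final (corner) position of the moving entry. -/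
def jdtAux : ℕ → (ℕ × ℕ → ℕ) → ℕ → ℕ → (ℕ × ℕ → ℕ) × ℕ × ℕ
  | 0, T, i, j => (T, i, j)
  | n+1, T, i, j =>
    if T (i+1, j) = 0 ∧ T (i, j+1) = 0 then (T, i, j)
    else if T (i, j+1) = 0 ∨ (T (i+1, j) ≠ 0 ∧ T (i+1, j) ≤ T (i, j+1)) then
      jdtAux n (fun c => if c = (i, j) then T (i+1, j)
                else if c = (i+1, j) then T (i, j) else T c) (i+1) j
    else
      jdtAux n (fun c => if c = (i, j) then T (i, j+1)
                else if c = (i, j+1) then T (i, j) else T c) i (j+1)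

/-- One run of reverse jeu de taquin with `fuel` steps: while the entry above or to the
left is larger than the moving entry at `(i, j)`, swap with the larger of the two. -/
def rjdtAux : ℕ → (ℕ × ℕ → ℕ) → ℕ → ℕ → (ℕ × ℕ → ℕ) × ℕ × ℕ
  | 0, T, i, j => (T, i, j)
  | n+1, T, i, j =>
    let up := if i = 0 then 0 else T (i-1, j)
    let lf := if j = 0 then 0 else T (i, j-1)
    if up ≤ T (i, j) ∧ lf ≤ T (i, j) then (T, i, j)
    else if lf ≤ up then
      rjdtAux n (fun c => if c = (i, j) then T (i-1, j)
                else if c = (i-1, j) then T (i, j) else T c) (i-1) j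
    else
      rjdtAux n (fun c => if c = (i, j) then T (i, j-1)
                else if c = (i, j-1) then T (i, j) else T c) i (j-1)

lemma rjdt_stop (T : ℕ × ℕ → ℕ) (i j : ℕ)
    (h1 : (if i = 0 then 0 else T (i-1, j)) ≤ T (i, j))
    (h2 : (if j = 0 then 0 else T (i, j-1)) ≤ T (i, j)) :
    ∀ m, rjdtAux m T i j = (T, i, j) := by
  intro m
  cases m with
  | zero => rfl
  | succ m =>
    rw [rjdtAux]
    exact if_pos ⟨h1, h2⟩

lemma rjdt_add (k m : ℕ) : ∀ T i j, rjdtAux (k + m) T i j =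
    rjdtAux m (rjdtAux k T i j).1 (rjdtAux k T i j).2.1 (rjdtAux k T i j).2.2 := by
  induction k with
  | zero => intro T i j; rw [Nat.zero_add]; rfl
  | succ k ih =>
    intro T i j
    rw [Nat.succ_add]
    rw [rjdtAux, rjdtAux]
    by_cases h : (if i = 0 then 0 else T (i-1, j)) ≤ T (i, j) ∧ (if j = 0 then 0 else T (i, j-1)) ≤ T (i, j)
    · simp only [if_pos h]
      exact (rjdt_stop T i j h.1 h.2 m).symm
    · simp only [if_neg h]
      split_ifs <;> exact ih _ _ _

lemma jdt_main (lam : YoungDiagram) :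
    ∀ (n : ℕ) (T : ℕ × ℕ → ℕ) (i j : ℕ),
    (∀ c : ℕ × ℕ, c ∈ lam ↔ T c ≠ 0) →
    Set.InjOn T {c : ℕ × ℕ | c ∈ lam} →
    (∀ c1 c2 : ℕ × ℕ, c1 ∈ lam → c2 ∈ lam → c1 ≠ (i,j) → c2 ≠ (i,j) → c1 ≠ c2 →
      c1.1 ≤ c2.1 → c1.2 ≤ c2.2 → T c1 < T c2) →
    (i, j) ∈ lam →
    (T (i+1,j) ≠ 0 → T (i,j) < T (i+1,j)) →
    (T (i,j+1) ≠ 0 → T (i,j) < T (i,j+1)) →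
    ∃ k, k ≤ n ∧ rjdtAux k (jdtAux n T i j).1 (jdtAux n T i j).2.1 (jdtAux n T i j).2.2 = (T, i, j) := by
  intro n
  induction n with
  | zero =>
    intro T i j _ _ _ _ _ _
    exact ⟨0, le_refl 0, rfl⟩
  | succ n ih =>
    intro T i j hA hC hD hB hE1 hE2
    have hx0 : T (i, j) ≠ 0 := (hA _).mp hB
    rw [jdtAux]
    by_cases hstop : T (i+1,j) = 0 ∧ T (i,j+1) = 0
    · rw [if_pos hstop]
      exact ⟨0, Nat.zero_le _, rfl⟩
    · rw [if_neg hstop]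
      by_cases hdir : T (i,j+1) = 0 ∨ (T (i+1,j) ≠ 0 ∧ T (i+1,j) ≤ T (i,j+1))
      · rw [if_pos hdir]
        set T' : ℕ × ℕ → ℕ := fun c => if c = (i, j) then T (i+1, j)
                else if c = (i+1, j) then T (i, j) else T c with hT'
        have hb : T (i+1,j) ≠ 0 := by
          rcases hdir with h | h
          · intro h0; exact hstop ⟨h0, h⟩
          · exact h.1
        have hmem : (i+1,j) ∈ lam := (hA _).mpr hb
        have hxu : T (i,j) < T (i+1,j) := hE1 hb
        have hne1 : ((i+1,j) : ℕ×ℕ) ≠ (i,j) := by simp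
        have hT'x : T' (i,j) = T (i+1,j) := by simp [hT']
        have hT'b : T' (i+1,j) = T (i,j) := by simp [hT']
        have hT'other : ∀ c : ℕ×ℕ, c ≠ (i,j) → c ≠ (i+1,j) → T' c = T c := by
          intro c h1 h2; simp [hT', h1, h2]
        have hA' : ∀ c : ℕ×ℕ, c ∈ lam ↔ T' c ≠ 0 := by
          intro c
          by_cases h1 : c = (i,j)
          · subst h1; rw [hT'x]; exact ⟨fun _ => hb, fun _ => hB⟩
          · by_cases h2 : c = (i+1,j)
            · subst h2; rw [hT'b]; exact ⟨fun _ => hx0, fun _ => hmem⟩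
            · rw [hT'other c h1 h2]; exact hA c
        have hswap : T' = T ∘ (Equiv.swap ((i,j) : ℕ×ℕ) (i+1,j)) := by
          funext c
          by_cases h1 : c = (i,j)
          · subst h1; simp [hT', Equiv.swap_apply_left]
          · by_cases h2 : c = (i+1,j)
            · subst h2; simp [hT', Equiv.swap_apply_right, hne1]
            · simp [hT', h1, h2, Equiv.swap_apply_of_ne_of_ne h1 h2]
        have hC' : Set.InjOn T' {c : ℕ×ℕ | c ∈ lam} := by
          rw [hswap]
          apply hC.comp (Equiv.injective _).injOn
          intro c hc
          by_cases h1 : c = (i,j)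
          · subst h1; simpa [Equiv.swap_apply_left] using hmem
          · by_cases h2 : c = (i+1,j)
            · subst h2; simpa [Equiv.swap_apply_right] using hB
            · simpa [Equiv.swap_apply_of_ne_of_ne h1 h2] using hc
        have hD' : ∀ c1 c2 : ℕ×ℕ, c1 ∈ lam → c2 ∈ lam → c1 ≠ (i+1,j) → c2 ≠ (i+1,j) →
            c1 ≠ c2 → c1.1 ≤ c2.1 → c1.2 ≤ c2.2 → T' c1 < T' c2 := by
          intro c1 c2 h1lam h2lam h1ne h2ne hne hle1 hle2
          by_cases e1 : c1 = (i,j)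
          · subst e1
            by_cases e2 : c2 = (i,j)
            · exact (hne e2.symm).elim
            · rw [hT'x, hT'other c2 e2 h2ne]
              have hle1' : i ≤ c2.1 := hle1
              have hle2' : j ≤ c2.2 := hle2
              by_cases hr : i + 1 ≤ c2.1
              · exact hD (i+1,j) c2 hmem h2lam hne1 e2 (fun hcc => h2ne hcc.symm) hr hle2'
              · have hc2i : c2.1 = i := by omega
                have hc2j : j + 1 ≤ c2.2 := by
                  rcases Nat.lt_or_ge c2.2 (j+1) with h | h
                  · exfalso; apply e2
                    have hj2 : c2.2 = j := by omega
                    rw [← hc2i, ← hj2]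
                  · exact h
                have hrmem : (i, j+1) ∈ lam := by
                  have := lam.up_left_mem (i1 := i) (j1 := j+1) (le_of_eq hc2i.symm) hc2j
                    (by rw [Prod.mk.eta] at *; exact (by rwa [← Prod.mk.eta (p := c2)] at h2lam))
                  exact this
                have hr0 : T (i,j+1) ≠ 0 := (hA _).mp hrmem
                have hur : T (i+1,j) ≤ T (i,j+1) := by
                  rcases hdir with h | h
                  · exact absurd h hr0
                  · exact h.2
                have hur' : T (i+1,j) < T (i,j+1) := by
                  rcases lt_or_eq_of_le hur with h | h
                  · exact h
                  · exfalso
                    have := hC (Set.mem_setOf.mpr hmem) (Set.mem_setOf.mpr hrmem) h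
                    simp at this
                by_cases e3 : c2 = (i,j+1)
                · rw [e3]; exact hur'
                · exact lt_trans hur' (hD (i,j+1) c2 hrmem h2lam (by simp) e2
                    (fun hcc => e3 hcc.symm) (by omega) hc2j)
          · by_cases e2 : c2 = (i,j)
            · subst e2
              rw [hT'x, hT'other c1 e1 h1ne]
              have hle1' : c1.1 ≤ i := hle1
              have hle2' : c1.2 ≤ j := hle2
              exact hD c1 (i+1,j) h1lam hmem e1 hne1 h1ne (by omega) (by omega)
            · rw [hT'other c1 e1 h1ne, hT'other c2 e2 h2ne]
              exact hD c1 c2 h1lam h2lam e1 e2 hne hle1 hle2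
        have hE1' : T' (i+1+1, j) ≠ 0 → T' (i+1,j) < T' (i+1+1,j) := by
          intro h
          have hne2 : ((i+1+1,j) : ℕ×ℕ) ≠ (i,j) := by
            intro hcc; rw [Prod.ext_iff] at hcc; omega
          have hne3 : ((i+1+1,j) : ℕ×ℕ) ≠ (i+1,j) := by
            intro hcc; rw [Prod.ext_iff] at hcc; omega
          rw [hT'other _ hne2 hne3] at h ⊢
          rw [hT'b]
          have hmem2 : (i+1+1, j) ∈ lam := (hA _).mpr h
          exact lt_trans hxu (hD (i+1,j) (i+1+1,j) hmem hmem2 hne1 hne2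
            (by intro hcc; rw [Prod.ext_iff] at hcc; omega)
            (by omega) (le_refl j))
        have hE2' : T' (i+1, j+1) ≠ 0 → T' (i+1,j) < T' (i+1,j+1) := by
          intro h
          have hne2 : ((i+1,j+1) : ℕ×ℕ) ≠ (i,j) := by
            intro hcc; rw [Prod.ext_iff] at hcc; omega
          have hne3 : ((i+1,j+1) : ℕ×ℕ) ≠ (i+1,j) := by
            intro hcc; rw [Prod.ext_iff] at hcc; omega
          rw [hT'other _ hne2 hne3] at h ⊢
          rw [hT'b]
          have hmem2 : (i+1, j+1) ∈ lam := (hA _).mpr h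
          exact lt_trans hxu (hD (i+1,j) (i+1,j+1) hmem hmem2 hne1 hne2
            (by intro hcc; rw [Prod.ext_iff] at hcc; omega)
            (le_refl _) (by omega))
        obtain ⟨k, hk, hrec⟩ := ih T' (i+1) j hA' hC' hD' hmem hE1' hE2'
        refine ⟨k+1, by omega, ?_⟩
        rw [rjdt_add k 1, hrec]
        show rjdtAux 1 T' (i+1) j = (T, i, j)
        rw [rjdtAux]
        have hup : (if i+1 = 0 then 0 else T' (i+1-1, j)) = T (i+1, j) := by
          rw [if_neg (Nat.succ_ne_zero i)]
          exact hT'x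
        have hcond : ¬((if i+1 = 0 then 0 else T' (i+1-1,j)) ≤ T' (i+1,j) ∧
            (if j = 0 then 0 else T' (i+1, j-1)) ≤ T' (i+1,j)) := by
          intro hcon
          have h1 := hcon.1
          rw [hup, hT'b] at h1
          omega
        have hlf : (if j = 0 then 0 else T' (i+1, j-1)) ≤
            (if i+1 = 0 then 0 else T' (i+1-1, j)) := by
          rw [hup]
          split_ifs with hj
          · exact Nat.zero_le _
          · have hnej1 : ((i+1, j-1) : ℕ×ℕ) ≠ (i,j) := by simp
            have hnej2 : ((i+1, j-1) : ℕ×ℕ) ≠ (i+1,j) := by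
              simp only [Prod.mk.injEq, ne_eq, not_and]
              intro _; omega
            rw [hT'other _ hnej1 hnej2]
            by_cases hz : T (i+1, j-1) = 0
            · rw [hz]; exact Nat.zero_le _
            · exact le_of_lt (hD (i+1,j-1) (i+1,j) ((hA _).mpr hz) hmem
                (by simp) hne1 (by simp only [Prod.mk.injEq, ne_eq, not_and]; intro _; omega)
                (le_refl _) (by omega))
        rw [if_neg hcond, if_pos hlf]
        show ((fun c => if c = (i+1, j) then T' (i+1-1, j)
            else if c = (i+1-1, j) then T' (i+1, j) else T' c), i+1-1, j) = (T, i, j)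
        have hfun : (fun c => if c = (i+1, j) then T' (i+1-1, j)
            else if c = (i+1-1, j) then T' (i+1, j) else T' c) = T := by
          funext c
          simp only [Nat.add_sub_cancel]
          by_cases h1 : c = (i+1,j)
          · subst h1; rw [if_pos rfl, hT'x]
          · rw [if_neg h1]
            by_cases h2 : c = (i,j)
            · subst h2; rw [if_pos rfl, hT'b]
            · rw [if_neg h2, hT'other c h2 h1]
        rw [hfun]
        simp
      · rw [if_neg hdir]
        push_neg at hdir
        obtain ⟨hr, hdir2⟩ := hdir
        set T' : ℕ × ℕ → ℕ := fun c => if c = (i, j) then T (i, j+1)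
                else if c = (i, j+1) then T (i, j) else T c with hT'
        have hmem : (i,j+1) ∈ lam := (hA _).mpr hr
        have hxu : T (i,j) < T (i,j+1) := hE2 hr
        have hne1 : ((i,j+1) : ℕ×ℕ) ≠ (i,j) := by
          intro hcc; rw [Prod.ext_iff] at hcc; omega
        have hT'x : T' (i,j) = T (i,j+1) := by simp [hT']
        have hT'b : T' (i,j+1) = T (i,j) := by simp [hT', hne1]
        have hT'other : ∀ c : ℕ×ℕ, c ≠ (i,j) → c ≠ (i,j+1) → T' c = T c := by
          intro c h1 h2; simp [hT', h1, h2]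
        have hA' : ∀ c : ℕ×ℕ, c ∈ lam ↔ T' c ≠ 0 := by
          intro c
          by_cases h1 : c = (i,j)
          · subst h1; rw [hT'x]; exact ⟨fun _ => hr, fun _ => hB⟩
          · by_cases h2 : c = (i,j+1)
            · subst h2; rw [hT'b]; exact ⟨fun _ => hx0, fun _ => hmem⟩
            · rw [hT'other c h1 h2]; exact hA c
        have hswap : T' = T ∘ (Equiv.swap ((i,j) : ℕ×ℕ) (i,j+1)) := by
          funext c
          by_cases h1 : c = (i,j)
          · subst h1; simp [hT', Equiv.swap_apply_left]
          · by_cases h2 : c = (i,j+1)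
            · subst h2; simp [hT', Equiv.swap_apply_right, hne1]
            · simp [hT', h1, h2, Equiv.swap_apply_of_ne_of_ne h1 h2]
        have hC' : Set.InjOn T' {c : ℕ×ℕ | c ∈ lam} := by
          rw [hswap]
          apply hC.comp (Equiv.injective _).injOn
          intro c hc
          by_cases h1 : c = (i,j)
          · subst h1; simpa [Equiv.swap_apply_left] using hmem
          · by_cases h2 : c = (i,j+1)
            · subst h2; simpa [Equiv.swap_apply_right] using hB
            · simpa [Equiv.swap_apply_of_ne_of_ne h1 h2] using hc
        have hD' : ∀ c1 c2 : ℕ×ℕ, c1 ∈ lam → c2 ∈ lam → c1 ≠ (i,j+1) → c2 ≠ (i,j+1) →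
            c1 ≠ c2 → c1.1 ≤ c2.1 → c1.2 ≤ c2.2 → T' c1 < T' c2 := by
          intro c1 c2 h1lam h2lam h1ne h2ne hne hle1 hle2
          by_cases e1 : c1 = (i,j)
          · subst e1
            by_cases e2 : c2 = (i,j)
            · exact (hne e2.symm).elim
            · rw [hT'x, hT'other c2 e2 h2ne]
              have hle1' : i ≤ c2.1 := hle1
              have hle2' : j ≤ c2.2 := hle2
              by_cases hr2 : j + 1 ≤ c2.2
              · exact hD (i,j+1) c2 hmem h2lam hne1 e2 (fun hcc => h2ne hcc.symm) hle1' hr2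
              · have hc2j : c2.2 = j := by omega
                have hc2i : i + 1 ≤ c2.1 := by
                  rcases Nat.lt_or_ge c2.1 (i+1) with h | h
                  · exfalso; apply e2
                    have hi2 : c2.1 = i := by omega
                    rw [Prod.ext_iff]; exact ⟨hi2, hc2j⟩
                  · exact h
                have hbmem : (i+1, j) ∈ lam := by
                  have h2lam' : (c2.1, c2.2) ∈ lam := by rwa [Prod.mk.eta]
                  exact lam.up_left_mem hc2i (le_of_eq hc2j.symm) h2lam'
                have hb0 : T (i+1,j) ≠ 0 := (hA _).mp hbmem
                have hur' : T (i,j+1) < T (i+1,j) := hdir2 hb0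
                by_cases e3 : c2 = (i+1,j)
                · rw [e3]; exact hur'
                · refine lt_trans hur' (hD (i+1,j) c2 hbmem h2lam ?_ e2
                    (fun hcc => e3 hcc.symm) hc2i (by omega))
                  intro hcc; rw [Prod.ext_iff] at hcc; omega
          · by_cases e2 : c2 = (i,j)
            · subst e2
              rw [hT'x, hT'other c1 e1 h1ne]
              have hle1' : c1.1 ≤ i := hle1
              have hle2' : c1.2 ≤ j := hle2
              exact hD c1 (i,j+1) h1lam hmem e1 hne1 h1ne (by omega) (by omega)
            · rw [hT'other c1 e1 h1ne, hT'other c2 e2 h2ne]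
              exact hD c1 c2 h1lam h2lam e1 e2 hne hle1 hle2
        have hE1' : T' (i+1, j+1) ≠ 0 → T' (i,j+1) < T' (i+1,j+1) := by
          intro h
          have hne2 : ((i+1,j+1) : ℕ×ℕ) ≠ (i,j) := by
            intro hcc; rw [Prod.ext_iff] at hcc; omega
          have hne3 : ((i+1,j+1) : ℕ×ℕ) ≠ (i,j+1) := by
            intro hcc; rw [Prod.ext_iff] at hcc; omega
          rw [hT'other _ hne2 hne3] at h ⊢
          rw [hT'b]
          have hmem2 : (i+1, j+1) ∈ lam := (hA _).mpr h
          exact lt_trans hxu (hD (i,j+1) (i+1,j+1) hmem hmem2 hne1 hne2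
            (by intro hcc; rw [Prod.ext_iff] at hcc; omega)
            (by omega) (le_refl _))
        have hE2' : T' (i, j+1+1) ≠ 0 → T' (i,j+1) < T' (i,j+1+1) := by
          intro h
          have hne2 : ((i,j+1+1) : ℕ×ℕ) ≠ (i,j) := by
            intro hcc; rw [Prod.ext_iff] at hcc; omega
          have hne3 : ((i,j+1+1) : ℕ×ℕ) ≠ (i,j+1) := by
            intro hcc; rw [Prod.ext_iff] at hcc; omega
          rw [hT'other _ hne2 hne3] at h ⊢
          rw [hT'b]
          have hmem2 : (i, j+1+1) ∈ lam := (hA _).mpr h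
          exact lt_trans hxu (hD (i,j+1) (i,j+1+1) hmem hmem2 hne1 hne2
            (by intro hcc; rw [Prod.ext_iff] at hcc; omega)
            (le_refl _) (by omega))
        obtain ⟨k, hk, hrec⟩ := ih T' i (j+1) hA' hC' hD' hmem hE1' hE2'
        refine ⟨k+1, by omega, ?_⟩
        rw [rjdt_add k 1, hrec]
        show rjdtAux 1 T' i (j+1) = (T, i, j)
        rw [rjdtAux]
        have hlfv : (if j+1 = 0 then 0 else T' (i, j+1-1)) = T (i, j+1) := by
          rw [if_neg (Nat.succ_ne_zero j)]
          exact hT'x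
        have hupv : (if i = 0 then 0 else T' (i-1, j+1)) < T (i, j+1) := by
          split_ifs with hi
          · exact Nat.pos_of_ne_zero hr
          · have hnei1 : ((i-1, j+1) : ℕ×ℕ) ≠ (i,j) := by
              intro hcc; rw [Prod.ext_iff] at hcc; omega
            have hnei2 : ((i-1, j+1) : ℕ×ℕ) ≠ (i,j+1) := by
              intro hcc; rw [Prod.ext_iff] at hcc; omega
            rw [hT'other _ hnei1 hnei2]
            by_cases hz : T (i-1, j+1) = 0
            · rw [hz]; exact Nat.pos_of_ne_zero hr
            · exact hD (i-1,j+1) (i,j+1) ((hA _).mpr hz) hmem hnei1 hne1 hnei2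
                (by omega) (le_refl _)
        have hcond : ¬((if i = 0 then 0 else T' (i-1,j+1)) ≤ T' (i,j+1) ∧
            (if j+1 = 0 then 0 else T' (i, j+1-1)) ≤ T' (i,j+1)) := by
          intro hcon
          have h1 := hcon.2
          rw [hlfv, hT'b] at h1
          omega
        have hnotle : ¬((if j+1 = 0 then 0 else T' (i, j+1-1)) ≤
            (if i = 0 then 0 else T' (i-1, j+1))) := by
          rw [hlfv]
          omega
        rw [if_neg hcond, if_neg hnotle]
        show ((fun c => if c = (i, j+1) then T' (i, j+1-1)
            else if c = (i, j+1-1) then T' (i, j+1) else T' c), i, j+1-1) = (T, i, j)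
        have hfun : (fun c => if c = (i, j+1) then T' (i, j+1-1)
            else if c = (i, j+1-1) then T' (i, j+1) else T' c) = T := by
          funext c
          simp only [Nat.add_sub_cancel]
          by_cases h1 : c = (i,j+1)
          · subst h1; rw [if_pos rfl, hT'x]
          · rw [if_neg h1]
            by_cases h2 : c = (i,j)
            · subst h2; rw [if_pos rfl, hT'b]
            · rw [if_neg h2, hT'other c h2 h1]
        rw [hfun]
        simp

/-- Jeu de taquin deletion is inverse to reverse jeu de taquin: if `T` is a standard
filling of the Young diagram `lam` (nonzero exactly on the cells of `lam`, injective
and strictly increasing along rows and columns there) and the entry `x` sits in cell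
`(i, j)`, then sliding `x` out by jeu de taquin and afterwards sliding it back from the
vacated corner by reverse jeu de taquin recovers `T` (and the original position). -/
theorem jdt_reverse_jdt (lam : YoungDiagram) (T : ℕ × ℕ → ℕ) (x i j : ℕ)
    (hcells : ∀ c : ℕ × ℕ, c ∈ lam ↔ T c ≠ 0)
    (hinj : Set.InjOn T {c : ℕ × ℕ | c ∈ lam})
    (hmono : ∀ c1 c2 : ℕ × ℕ, c1 ∈ lam → c2 ∈ lam → c1 ≠ c2 →
      c1.1 ≤ c2.1 → c1.2 ≤ c2.2 → T c1 < T c2)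
    (hx : (i, j) ∈ lam) (hTx : T (i, j) = x) :
    rjdtAux lam.card (jdtAux lam.card T i j).1
        (jdtAux lam.card T i j).2.1 (jdtAux lam.card T i j).2.2 = (T, i, j) := by
  obtain ⟨k, hk, hrec⟩ := jdt_main lam lam.card T i j hcells hinj
    (fun c1 c2 h1 h2 _ _ hne hl1 hl2 => hmono c1 c2 h1 h2 hne hl1 hl2)
    hx
    (fun h => hmono (i,j) (i+1,j) hx ((hcells _).mpr h)
      (by intro hcc; rw [Prod.ext_iff] at hcc; omega) (by omega) (le_refl _))
    (fun h => hmono (i,j) (i,j+1) hx ((hcells _).mpr h)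
      (by intro hcc; rw [Prod.ext_iff] at hcc; omega) (le_refl _) (by omega))
  have hcard : lam.card = k + (lam.card - k) := by omega
  set F := (jdtAux lam.card T i j).1 with hF
  set a := (jdtAux lam.card T i j).2.1 with ha
  set b := (jdtAux lam.card T i j).2.2 with hb
  rw [hcard, rjdt_add, hrec]
  refine rjdt_stop T i j ?_ ?_ _
  · split_ifs with hi
    · exact Nat.zero_le _
    · by_cases hz : T (i-1,j) = 0
      · rw [hz]; exact Nat.zero_le _
      · exact le_of_lt (hmono (i-1,j) (i,j) ((hcells _).mpr hz) hx
          (by intro hcc; rw [Prod.ext_iff] at hcc; omega) (Nat.sub_le i 1) (le_refl _))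
  · split_ifs with hj
    · exact Nat.zero_le _
    · by_cases hz : T (i,j-1) = 0
      · rw [hz]; exact Nat.zero_le _
      · exact le_of_lt (hmono (i,j-1) (i,j) ((hcells _).mpr hz) hx
          (by intro hcc; rw [Prod.ext_iff] at hcc; omega) (le_refl _) (Nat.sub_le j 1))
end

section
/- RSK row insertion of x into a tableau S with distinct entries, increasing rows and columns, and not containing x, produces a tableau T whose shape is the shape of S plus one box, whose entries are those of S together with x, and this insertion is invertible: given T and the added box, one can uniquely recover S and x by uninsertion. -/
/-- RSK row insertion of `x` into a tableau given as its list of rows. -/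
def rowInsert : ℕ → List (List ℕ) → List (List ℕ)
  | x, [] => [[x]]
  | x, R :: rest =>
    match R.findIdx? (fun y => decide (x < y)) with
    | none => (R ++ [x]) :: rest
    | some idx => (R.set idx x) :: rowInsert (R.getD idx 0) rest

/-- `S` is a tableau with distinct positive entries, strictly increasing rows and
columns (rows listed top to bottom, with weakly decreasing lengths and no empty row). -/
def IsTableau (S : List (List ℕ)) : Prop :=
  (∀ R ∈ S, List.Pairwise (· < ·) R) ∧
  (∀ i, i + 1 < S.length → (S.getD (i+1) []).length ≤ (S.getD i []).length) ∧
  (∀ i j, i + 1 < S.length → j < (S.getD (i+1) []).length →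
    (S.getD i []).getD j 0 < (S.getD (i+1) []).getD j 0) ∧
  S.flatten.Nodup ∧
  (∀ y ∈ S.flatten, 0 < y) ∧
  (∀ R ∈ S, R ≠ [])

/-!
Follow the bumping path. If `x` replaces `y = R[i]` in a row `R`, then `x < y`, so entries of
`R` only decrease, and `y` lands in the next row at a column `≤ i`, because the entry below
`R[i]` already exceeds `y`; the entry above its new place is at most `x < y`. Hence rows and
columns stay strictly increasing. Each row trades its bumped entry for the incoming one, so
the entries are permuted, and the last step adds one box. For invertibility, equal shapes
force the two insertions to take the same branch in every row, and from the bottom up each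
row before insertion is recovered from the row after it and the entry bumped out of it: the
replaced position is forced, since at any other position the new row would not be
increasing.
-/

open List

-- The existential also encodes `R'.length ≤ R.length`.
def ColStrict (R R' : List ℕ) : Prop :=
  ∀ j (hj : j < R'.length), ∃ hj' : j < R.length, R[j] < R'[j]

def IsIncreasing (S : List (List ℕ)) : Prop :=
  (∀ R ∈ S, R.Pairwise (· < ·)) ∧ S.IsChain ColStrict

def insertIntoRow (x : ℕ) (R : List ℕ) : List ℕ :=
  match R.findIdx? (fun y => decide (x < y)) with
  | none => R ++ [x]
  | some i => R.set i x

section Row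

variable {x x' i i' : ℕ} {R R' : List ℕ}

theorem le_of_findIdx?_eq_none (h : R.findIdx? (fun y => decide (x < y)) = none) :
    ∀ y ∈ R, y ≤ x := by
  simpa using findIdx?_eq_none_iff.1 h

theorem exists_of_findIdx?_eq_some (h : R.findIdx? (fun y => decide (x < y)) = some i) :
    ∃ hi : i < R.length, x < R[i] ∧ ∀ k (hk : k < i), R[k] ≤ x := by
  simpa using findIdx?_eq_some_iff_getElem.1 h

theorem pairwise_append_singleton_of_findIdx?_eq_none (hR : R.Pairwise (· < ·)) (hxR : x ∉ R)
    (h : R.findIdx? (fun y => decide (x < y)) = none) : (R ++ [x]).Pairwise (· < ·) :=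
  pairwise_append.2 ⟨hR, pairwise_singleton _ _, fun a ha b hb => by
    rw [mem_singleton.1 hb]
    exact (le_of_findIdx?_eq_none h a ha).lt_of_ne (by rintro rfl; exact hxR ha)⟩

theorem pairwise_set_of_findIdx?_eq_some (hR : R.Pairwise (· < ·)) (hxR : x ∉ R)
    (h : R.findIdx? (fun y => decide (x < y)) = some i) : (R.set i x).Pairwise (· < ·) := by
  obtain ⟨hi, hxi, hle⟩ := exists_of_findIdx?_eq_some h
  rw [pairwise_iff_getElem] at hR ⊢
  intro a b ha hb hab
  simp only [length_set] at ha hb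
  simp only [getElem_set]
  split_ifs with hia hib hib
  · omega
  · subst hia
    exact hxi.trans (hR _ _ _ _ hab)
  · exact (hle a (by omega)).lt_of_ne fun heq => hxR (heq ▸ getElem_mem _)
  · exact hR _ _ _ _ hab

theorem colStrict_iff : ColStrict R R' ↔
    R'.length ≤ R.length ∧ ∀ j < R'.length, R.getD j 0 < R'.getD j 0 := by
  constructor
  · intro h
    refine ⟨?_, fun j hj => ?_⟩
    · by_contra! hlt
      obtain ⟨h', -⟩ := h R.length hlt
      exact lt_irrefl _ h'
    · obtain ⟨hj', hlt⟩ := h j hj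
      rwa [getD_eq_getElem _ _ hj', getD_eq_getElem _ _ hj]
  · rintro ⟨hlen, h⟩ j hj
    have hj' := hj.trans_le hlen
    refine ⟨hj', ?_⟩
    simpa only [getD_eq_getElem _ _ hj, getD_eq_getElem _ _ hj'] using h j hj

theorem colStrict_nil (R : List ℕ) : ColStrict R [] :=
  fun _ hj => absurd hj (Nat.not_lt_zero _)

theorem ColStrict.append_left (h : ColStrict R R') (x : ℕ) : ColStrict (R ++ [x]) R' := by
  intro j hj
  obtain ⟨hj', hlt⟩ := h j hj
  exact ⟨by rw [length_append, length_singleton]; omega, by rwa [getElem_append_left hj']⟩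

-- Since `R[i] < R'[i]`, the bumped entry `R[i]` lands in `R'` at a column `≤ i`.
theorem ColStrict.set_insertIntoRow (hcol : ColStrict R R') (hi : i < R.length)
    (hx : x < R[i]) (hbef : ∀ k (hk : k < i), R[k] < x) :
    ColStrict (R.set i x) (insertIntoRow R[i] R') := by
  have below : ∀ j (hj : j < R.length), (R.set i x)[j]'(by simpa) ≤ R[j] := by
    intro j hj
    rw [getElem_set]
    split_ifs with h
    · subst h; exact hx.le
    · exact le_rfl
  have left : ∀ j (hj : j ≤ i), (R.set i x)[j]'(by rw [length_set]; omega) < R[i] := by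
    intro j hj
    rw [getElem_set]
    split_ifs with h
    · exact hx
    · exact (hbef j (by omega)).trans hx
  unfold insertIntoRow
  cases h : R'.findIdx? (fun y => decide (R[i] < y)) with
  | none =>
    have hlen : R'.length ≤ i := by
      by_contra! hlt
      obtain ⟨_, hlt'⟩ := hcol i hlt
      exact (le_of_findIdx?_eq_none h _ (getElem_mem hlt)).not_gt hlt'
    intro j hj
    rw [length_append, length_singleton] at hj
    refine ⟨by rw [length_set]; omega, ?_⟩
    rcases Nat.lt_succ_iff_lt_or_eq.1 hj with hj | rfl
    · obtain ⟨hj', hlt⟩ := hcol j hj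
      rw [getElem_append_left hj]
      exact (below j hj').trans_lt hlt
    · rw [getElem_concat_length rfl]
      exact left _ hlen
  | some p =>
    obtain ⟨hp, -, hle⟩ := exists_of_findIdx?_eq_some h
    have hpi : p ≤ i := by
      by_contra! hlt
      obtain ⟨_, hlt'⟩ := hcol i (by omega)
      exact (hle i hlt).not_gt hlt'
    intro j hj
    rw [length_set] at hj
    obtain ⟨hj', hlt⟩ := hcol j hj
    refine ⟨by simpa using hj', ?_⟩
    rw [getElem_set (l := R')]
    split_ifs with hpj
    · subst hpj; exact left p hpi
    · exact (below j hj').trans_lt hlt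

-- If `i < i'`, position `i'` of the common row holds both `R[i'] > R[i]` and `x' < R'[i'] = R[i]`.
theorem le_of_set_eq_set (hR : R.Pairwise (· < ·)) (hi : i < R.length) (hi' : i' < R'.length)
    (hx' : x' < R'[i']) (hset : R.set i x = R'.set i' x') (hy : R[i] = R'[i']) : i' ≤ i := by
  by_contra! hlt
  have hlen : R'.length = R.length := by simpa using (congrArg length hset).symm
  have hi'R : i' < R.length := hlen ▸ hi'
  have hentry := getElem_of_eq hset (by simpa using hi'R)
  rw [getElem_set_ne hlt.ne, getElem_set_self] at hentry
  have hmono : R[i] < R[i'] := pairwise_iff_getElem.1 hR _ _ _ _ hlt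
  omega

theorem eq_of_set_eq_set (hR : R.Pairwise (· < ·)) (hR' : R'.Pairwise (· < ·))
    (hi : i < R.length) (hi' : i' < R'.length) (hx : x < R[i]) (hx' : x' < R'[i'])
    (hset : R.set i x = R'.set i' x') (hy : R[i] = R'[i']) : R = R' ∧ x = x' := by
  obtain rfl : i = i' := le_antisymm (le_of_set_eq_set hR' hi' hi hx hset.symm hy.symm)
    (le_of_set_eq_set hR hi hi' hx' hset hy)
  refine ⟨?_, ?_⟩
  · calc R = (R.set i x).set i R[i] := by rw [set_set, set_getElem_self]
      _ = (R'.set i x').set i R'[i] := by rw [hset, hy]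
      _ = R' := by rw [set_set, set_getElem_self]
  · have hentry := getElem_of_eq hset (by simpa using hi)
    rwa [getElem_set_self, getElem_set_self] at hentry

end Row

section Tableau

variable {x : ℕ} {R : List ℕ} {rest S : List (List ℕ)}

theorem rowInsert_cons_of_findIdx?_eq_none (h : R.findIdx? (fun y => decide (x < y)) = none) :
    rowInsert x (R :: rest) = (R ++ [x]) :: rest := by
  rw [rowInsert, h]

theorem rowInsert_cons_of_findIdx?_eq_some {i : ℕ}
    (h : R.findIdx? (fun y => decide (x < y)) = some i) :
    rowInsert x (R :: rest) = R.set i x :: rowInsert (R.getD i 0) rest := by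
  rw [rowInsert, h]

theorem headD_rowInsert (x : ℕ) (S : List (List ℕ)) :
    (rowInsert x S).headD [] = insertIntoRow x (S.headD []) := by
  rcases S with _ | ⟨R, rest⟩
  · rfl
  · unfold insertIntoRow
    cases h : R.findIdx? (fun y => decide (x < y)) <;> simp [rowInsert, h]

theorem isChain_colStrict_cons :
    (R :: rest).IsChain ColStrict ↔ ColStrict R (rest.headD []) ∧ rest.IsChain ColStrict := by
  rcases rest with _ | ⟨R', rest⟩ <;> simp [colStrict_nil]

theorem isIncreasing_cons :
    IsIncreasing (R :: rest) ↔
      R.Pairwise (· < ·) ∧ ColStrict R (rest.headD []) ∧ IsIncreasing rest := by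
  simp only [IsIncreasing, mem_cons, forall_eq_or_imp, isChain_colStrict_cons]
  tauto

theorem isChain_colStrict_iff : S.IsChain ColStrict ↔
    (∀ i, i + 1 < S.length → (S.getD (i+1) []).length ≤ (S.getD i []).length) ∧
    (∀ i j, i + 1 < S.length → j < (S.getD (i+1) []).length →
      (S.getD i []).getD j 0 < (S.getD (i+1) []).getD j 0) := by
  have hrow : ∀ i (hi : i + 1 < S.length),
      S.getD i [] = S[i] ∧ S.getD (i+1) [] = S[i+1] := fun i hi =>
    ⟨getD_eq_getElem _ _ (by omega), getD_eq_getElem _ _ hi⟩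
  rw [isChain_iff_getElem]
  constructor
  · intro h
    refine ⟨fun i hi => ?_, fun i j hi => ?_⟩
    · simpa only [(hrow i hi).1, (hrow i hi).2] using (colStrict_iff.1 (h i hi)).1
    · simpa only [(hrow i hi).1, (hrow i hi).2] using (colStrict_iff.1 (h i hi)).2 j
  · rintro ⟨hlen, hcol⟩ i hi
    rw [colStrict_iff, ← (hrow i hi).1, ← (hrow i hi).2]
    exact ⟨hlen i hi, fun j => hcol i j hi⟩

theorem isTableau_iff : IsTableau S ↔
    IsIncreasing S ∧ S.flatten.Nodup ∧ (∀ y ∈ S.flatten, 0 < y) ∧ ∀ R ∈ S, R ≠ [] := by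
  rw [IsTableau, IsIncreasing, isChain_colStrict_iff]
  tauto

theorem rowInsert_flatten_perm (x : ℕ) (S : List (List ℕ)) :
    (rowInsert x S).flatten ~ x :: S.flatten := by
  induction S generalizing x with
  | nil => simp [rowInsert]
  | cons R rest ih =>
    cases h : R.findIdx? (fun y => decide (x < y)) with
    | none =>
      rw [rowInsert_cons_of_findIdx?_eq_none h]
      simp
    | some i =>
      obtain ⟨hi, -⟩ := exists_of_findIdx?_eq_some h
      rw [rowInsert_cons_of_findIdx?_eq_some h, getD_eq_getElem _ _ hi, flatten_cons, flatten_cons]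
      calc R.set i x ++ (rowInsert R[i] rest).flatten
          ~ R.set i x ++ R[i] :: rest.flatten := (ih _).append_left _
        _ ~ x :: (R.eraseIdx i ++ R[i] :: rest.flatten) :=
          (set_perm_cons_eraseIdx hi x).append_right _
        _ ~ x :: (R[i] :: R.eraseIdx i ++ rest.flatten) := perm_middle.cons x
        _ ~ x :: (R ++ rest.flatten) := ((getElem_cons_eraseIdx_perm hi).append_right _).cons x

theorem length_getD_le_rowInsert (x : ℕ) (S : List (List ℕ)) (i : ℕ) :
    (S.getD i []).length ≤ ((rowInsert x S).getD i []).length := by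
  induction S generalizing x i with
  | nil => simp
  | cons R rest ih =>
    cases h : R.findIdx? (fun y => decide (x < y)) with
    | none =>
      rw [rowInsert_cons_of_findIdx?_eq_none h]
      cases i <;> simp
    | some k =>
      rw [rowInsert_cons_of_findIdx?_eq_some h]
      cases i with
      | zero => simp
      | succ i => simpa using ih _ i

theorem ne_nil_of_mem_rowInsert (hS : ∀ R ∈ S, R ≠ []) : ∀ R ∈ rowInsert x S, R ≠ [] := by
  induction S generalizing x with
  | nil => simp [rowInsert]
  | cons R rest ih =>
    simp only [mem_cons, forall_eq_or_imp] at hS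
    cases h : R.findIdx? (fun y => decide (x < y)) with
    | none =>
      rw [rowInsert_cons_of_findIdx?_eq_none h]
      simpa using hS.2
    | some i =>
      rw [rowInsert_cons_of_findIdx?_eq_some h, forall_mem_cons]
      exact ⟨ne_nil_of_length_pos (by rw [length_set]; exact length_pos_iff.2 hS.1), ih hS.2⟩

theorem IsIncreasing.rowInsert (hS : IsIncreasing S) (hx : (x :: S.flatten).Nodup) :
    IsIncreasing (rowInsert x S) := by
  induction S generalizing x with
  | nil => simp [IsIncreasing, _root_.rowInsert]
  | cons R rest ih =>
    obtain ⟨hR, hcol, hrest⟩ := isIncreasing_cons.1 hS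
    rw [flatten_cons, nodup_cons, mem_append, not_or] at hx
    obtain ⟨⟨hxR, -⟩, hnodup⟩ := hx
    cases h : R.findIdx? (fun y => decide (x < y)) with
    | none =>
      rw [rowInsert_cons_of_findIdx?_eq_none h, isIncreasing_cons]
      exact ⟨pairwise_append_singleton_of_findIdx?_eq_none hR hxR h, hcol.append_left x, hrest⟩
    | some i =>
      obtain ⟨hi, hxi, hle⟩ := exists_of_findIdx?_eq_some h
      have hbumped : (R[i] :: rest.flatten).Nodup :=
        hnodup.sublist ((singleton_sublist.2 (getElem_mem hi)).append (Sublist.refl _))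
      rw [rowInsert_cons_of_findIdx?_eq_some h, getD_eq_getElem _ _ hi, isIncreasing_cons,
        headD_rowInsert]
      refine ⟨pairwise_set_of_findIdx?_eq_some hR hxR h,
        hcol.set_insertIntoRow hi hxi fun k hk => ?_, ih hrest hbumped⟩
      exact (hle k hk).lt_of_ne fun heq => hxR (heq ▸ getElem_mem _)

theorem eq_of_rowInsert_eq {S S' : List (List ℕ)} {x x' : ℕ}
    (hS : ∀ R ∈ S, R.Pairwise (· < ·)) (hS' : ∀ R ∈ S', R.Pairwise (· < ·))
    (hshape : S'.map length = S.map length) (h : rowInsert x' S' = rowInsert x S) :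
    S' = S ∧ x' = x := by
  induction S generalizing S' x x' with
  | nil =>
    obtain rfl : S' = [] := by simpa using hshape
    simpa [_root_.rowInsert] using h
  | cons R rest ih =>
    obtain ⟨R', rest', rfl⟩ := exists_cons_of_ne_nil (l := S') (by rintro rfl; simp at hshape)
    simp only [map_cons, cons.injEq] at hshape
    simp only [mem_cons, forall_eq_or_imp] at hS hS'
    cases h₁ : R.findIdx? (fun y => decide (x < y)) <;>
      cases h₂ : R'.findIdx? (fun y => decide (x' < y)) <;>
      simp only [_root_.rowInsert, h₁, h₂, cons.injEq] at h
    case none.none =>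
      obtain ⟨rfl, hx⟩ := append_inj h.1 hshape.1
      exact ⟨by rw [h.2], by simpa using hx⟩
    case none.some | some.none =>
      have := congrArg length h.1
      simp only [length_append, length_set, length_singleton] at this
      omega
    case some.some i i' =>
      obtain ⟨hi, hxi, -⟩ := exists_of_findIdx?_eq_some h₁
      obtain ⟨hi', hxi', -⟩ := exists_of_findIdx?_eq_some h₂
      rw [getD_eq_getElem _ _ hi, getD_eq_getElem _ _ hi'] at h
      obtain ⟨rfl, hy⟩ := ih hS.2 hS'.2 hshape.2 h.2
      obtain ⟨rfl, rfl⟩ := eq_of_set_eq_set hS'.1 hS.1 hi' hi hxi' hxi h.1 hy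
      exact ⟨rfl, rfl⟩

end Tableau

/-- RSK row insertion of `x` into a tableau `S` not containing `x` produces a tableau
whose shape is that of `S` plus one box and whose entries are those of `S` together
with `x`; moreover insertion is invertible: the result together with the shape of `S`
(equivalently, the added box) uniquely determines `S` and `x`. -/
theorem rowInsert_spec (S : List (List ℕ)) (x : ℕ)
    (hS : IsTableau S) (hx : 0 < x) (hxS : x ∉ S.flatten) :
    IsTableau (rowInsert x S) ∧
    (rowInsert x S).flatten.Perm (x :: S.flatten) ∧
    ((rowInsert x S).map List.length).sum = (S.map List.length).sum + 1 ∧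
    (∀ i, (S.getD i []).length ≤ ((rowInsert x S).getD i []).length) ∧
    (∀ S' x', IsTableau S' → 0 < x' → x' ∉ S'.flatten →
      rowInsert x' S' = rowInsert x S → S'.map List.length = S.map List.length →
      S' = S ∧ x' = x) := by
  obtain ⟨hinc, hnodup, hpos, hne⟩ := isTableau_iff.1 hS
  have hperm := rowInsert_flatten_perm x S
  have hnodup' : (x :: S.flatten).Nodup := nodup_cons.2 ⟨hxS, hnodup⟩
  refine ⟨?_, hperm, ?_, length_getD_le_rowInsert x S, ?_⟩
  · refine isTableau_iff.2 ⟨hinc.rowInsert hnodup', hperm.nodup_iff.2 hnodup', fun y hy => ?_,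
      ne_nil_of_mem_rowInsert hne⟩
    rcases mem_cons.1 (hperm.subset hy) with rfl | hy
    exacts [hx, hpos y hy]
  · simpa [← length_flatten] using hperm.length_eq
  · intro S' x' hS' _ _ h hshape
    exact eq_of_rowInsert_eq hinc.1 (isTableau_iff.1 hS').1.1 hshape h
end
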